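/- arXiv:2301.09742 — 2 statements merged into one kernel-verified Lean document; each statement's English description precedes it below -/
import Mathlib

section
/- Let M_a = {x ∈ ℝ² : 1 ≤ ‖x‖ ≤ 2} (an annulus) and M_b = {x ∈ ℝ² : ‖x‖ ≤ 1/2} (a cluster inside the hole of the annulus). For every homeomorphism f : ℝ² → ℝ², there do not exist a nonzero vector v ∈ ℝ² and a real number c such that ⟪v, y⟫ > c for all y ∈ f(M_a) and ⟪v, y⟫ < c for all y ∈ f(M_b). In other words, no hidden-layer transformation of ℝ² that is a homeomorphism (as is the case for smooth activation layers of width 2) can make the two classes linearly separable. -/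
/-!
Suppose `⟪v, ·⟫ < c` on `f '' M_b` and `> c` on `f '' M_a`. The open half-plane `{⟪v, ·⟫ < c}`
is connected and unbounded, so its preimage under `f` is connected, contains `0 ∈ M_b`, and is
unbounded (`f` maps bounded sets of the proper space `ℝ²` to bounded sets). A connected set
reaching from the unit disc to infinity meets the unit circle, which lies in `M_a`: a
contradiction.
-/

open scoped RealInnerProductSpace
open Bornology Metric

theorem ContinuousLinearMap.not_isBounded_setOf_lt {E : Type*} [SeminormedAddCommGroup E]
    [NormedSpace ℝ E] {ℓ : E →L[ℝ] ℝ} (hℓ : ℓ ≠ 0) (c : ℝ) : ¬IsBounded {y | ℓ y < c} := by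
  intro h
  have hsurj : Function.Surjective ℓ :=
    LinearMap.surjective_of_ne_zero (f := (ℓ : E →ₗ[ℝ] ℝ)) (by exact_mod_cast hℓ)
  have himage : ℓ '' {y | ℓ y < c} = Set.Iio c := by
    ext t; constructor
    · rintro ⟨y, hy, rfl⟩; exact hy
    · intro ht; obtain ⟨y, rfl⟩ := hsurj t; exact ⟨y, ht, rfl⟩
  have := ℓ.lipschitz.isBounded_image h
  rw [himage, isBounded_iff_bddBelow_bddAbove] at this
  exact not_bddBelow_Iio c this.1

theorem Homeomorph.isBounded_of_isBounded_preimage {X Y : Type*} [PseudoMetricSpace X]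
    [ProperSpace X] [PseudoMetricSpace Y] (f : X ≃ₜ Y) {s : Set Y}
    (hs : IsBounded (f ⁻¹' s)) : IsBounded s :=
  (hs.isCompact_closure.image f.continuous).isBounded.subset <|
    (f.image_preimage s).symm.subset.trans (Set.image_mono subset_closure)

theorem IsPreconnected.exists_norm_eq {E : Type*} [SeminormedAddCommGroup E] {S : Set E}
    (hS : IsPreconnected S) (hSb : ¬IsBounded S) {x : E} (hx : x ∈ S) {r : ℝ} (hxr : ‖x‖ ≤ r) :
    ∃ z ∈ S, ‖z‖ = r := by
  simp only [isBounded_iff_forall_norm_le, not_exists, not_forall, not_le] at hSb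
  obtain ⟨y, hy, hry⟩ := hSb r
  exact hS.intermediate_value hx hy continuous_norm.continuousOn ⟨hxr, hry.le⟩

/-- No homeomorphism of ℝ² can make the annulus `M_a = {1 ≤ ‖x‖ ≤ 2}` and the inner
cluster `M_b = {‖x‖ ≤ 1/2}` linearly separable. -/
theorem no_linear_separation_after_homeomorphism
    (Ma Mb : Set (EuclideanSpace ℝ (Fin 2)))
    (hMa : Ma = {x | 1 ≤ ‖x‖ ∧ ‖x‖ ≤ 2})
    (hMb : Mb = {x | ‖x‖ ≤ 1 / 2})
    (f : EuclideanSpace ℝ (Fin 2) ≃ₜ EuclideanSpace ℝ (Fin 2)) :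
    ¬ ∃ (v : EuclideanSpace ℝ (Fin 2)) (c : ℝ), v ≠ 0 ∧
      (∀ y ∈ f '' Ma, ⟪v, y⟫ > c) ∧ (∀ y ∈ f '' Mb, ⟪v, y⟫ < c) := by
  rintro ⟨v, c, hv, hMa_above, hMb_below⟩
  set ℓ := innerSL ℝ v
  have hℓ : ℓ ≠ 0 := by rwa [← norm_ne_zero_iff, innerSL_apply_norm, norm_ne_zero_iff]
  set S := f ⁻¹' {y | ℓ y < c}
  have hS : IsPreconnected S :=
    f.isPreconnected_preimage.mpr (convex_halfSpace_lt ℓ.toLinearMap.isLinear c).isPreconnected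
  have hSb : ¬IsBounded S := fun h ↦
    ℓ.not_isBounded_setOf_lt hℓ c (f.isBounded_of_isBounded_preimage h)
  have h0 : (0 : EuclideanSpace ℝ (Fin 2)) ∈ S :=
    hMb_below _ ⟨0, by norm_num [hMb], rfl⟩
  obtain ⟨z, hzS, hz⟩ := hS.exists_norm_eq hSb h0 (r := 1) (by simp)
  exact (hMa_above _ ⟨z, by norm_num [hMa, hz], rfl⟩).not_gt hzS
end

section
/- Let M_a = {x ∈ ℝ² : 1 ≤ ‖x‖ ≤ 2} and M_b = {x ∈ ℝ² : ‖x‖ ≤ 1/2}. There exist a width k, an affine map A : ℝ² → ℝᵏ, a weight vector w ∈ ℝᵏ, and a threshold c ∈ ℝ such that the one-hidden-layer ReLU network g(x) = ⟪w, ReLU(A x)⟫ (with ReLU(t) = max(t,0) applied coordinatewise) satisfies g(x) > c for all x ∈ M_a and g(y) < c for all y ∈ M_b. Thus, unlike networks whose layers are homeomorphisms, a ReLU network can produce a linear boundary separating the annulus from the cluster inside its hole. -/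
/-!
The network with hidden units `ReLU(xᵢ)` and `ReLU(-xᵢ)` and all output weights `1` computes
the `ℓ¹` norm `∑ |xᵢ|`, since `max a 0 + max (-a) 0 = |a|`. On `ℝⁿ` the `ℓ¹` norm lies between
`‖x‖` and `√n ‖x‖`, so it is `≥ 1` on the annulus and `≤ √2 / 2 < 1` on the inner disc.
-/

open scoped RealInnerProductSpace

noncomputable section

namespace EuclideanSpace

variable {ι : Type*} [Fintype ι]

def relu (v : EuclideanSpace ℝ ι) : EuclideanSpace ℝ ι :=
  WithLp.toLp 2 fun i => max (v i) 0

theorem norm_le_sum_abs (x : EuclideanSpace ℝ ι) : ‖x‖ ≤ ∑ i, |x i| := by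
  refine (pow_le_pow_iff_left₀ (norm_nonneg x) (by positivity) two_ne_zero).1 ?_
  calc ‖x‖ ^ 2 = ∑ i, |x i| ^ 2 := by simp only [real_norm_sq_eq, sq_abs]
    _ ≤ (∑ i, |x i|) ^ 2 := Finset.sum_sq_le_sq_sum_of_nonneg fun i _ => abs_nonneg (x i)

theorem sum_abs_le_sqrt_card_mul_norm (x : EuclideanSpace ℝ ι) :
    ∑ i, |x i| ≤ √(Fintype.card ι) * ‖x‖ := by
  refine (pow_le_pow_iff_left₀ (by positivity) (by positivity) two_ne_zero).1 ?_
  calc (∑ i, |x i|) ^ 2 ≤ Fintype.card ι * ∑ i, |x i| ^ 2 := sq_sum_le_card_mul_sum_sq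
    _ = (√(Fintype.card ι) * ‖x‖) ^ 2 := by
      rw [mul_pow, Real.sq_sqrt (Nat.cast_nonneg _), real_norm_sq_eq]
      simp only [sq_abs]

def appendNeg (n : ℕ) : EuclideanSpace ℝ (Fin n) →ₗ[ℝ] EuclideanSpace ℝ (Fin (n + n)) where
  toFun x := WithLp.toLp 2 (Fin.append x (-x))
  map_add' x y := by
    ext i
    refine Fin.addCases (fun i => ?_) (fun i => ?_) i <;> simp [-Fin.natAdd_eq_addNat, add_comm]
  map_smul' c x := by
    ext i
    refine Fin.addCases (fun i => ?_) (fun i => ?_) i <;> simp [-Fin.natAdd_eq_addNat]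

theorem inner_one_relu_appendNeg {n : ℕ} (x : EuclideanSpace ℝ (Fin n)) :
    ⟪WithLp.toLp 2 fun _ => 1, relu (appendNeg n x)⟫ = ∑ i, |x i| := by
  simp only [PiLp.inner_apply, Real.inner_apply, one_mul, Fin.sum_univ_add, relu, appendNeg,
    LinearMap.coe_mk, AddHom.coe_mk, Fin.append_left, Fin.append_right, ← Finset.sum_add_distrib]
  simp [max_zero_add_max_neg_zero_eq_abs_self]

theorem exists_relu_network_separates_exterior_from_ball (n : ℕ) {r R : ℝ} (h : √n * r < R) :
    ∃ c : ℝ, (∀ x : EuclideanSpace ℝ (Fin n), R ≤ ‖x‖ →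
        c < ⟪WithLp.toLp 2 fun _ => 1, relu (appendNeg n x)⟫) ∧
      ∀ x : EuclideanSpace ℝ (Fin n), ‖x‖ ≤ r →
        ⟪WithLp.toLp 2 fun _ => 1, relu (appendNeg n x)⟫ < c := by
  refine ⟨(√n * r + R) / 2, fun x hx => ?_, fun x hx => ?_⟩ <;> rw [inner_one_relu_appendNeg]
  · linarith [norm_le_sum_abs x]
  · calc ∑ i, |x i| ≤ √n * ‖x‖ := by simpa using sum_abs_le_sqrt_card_mul_norm x
      _ ≤ √n * r := by gcongr
      _ < _ := by linarith

end EuclideanSpace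

end

open EuclideanSpace in
/-- A one-hidden-layer ReLU network `g x = ⟪w, ReLU (A x)⟫` (coordinatewise ReLU, `A`
affine) can separate the annulus `M_a = {1 ≤ ‖x‖ ≤ 2}` from the inner cluster
`M_b = {‖x‖ ≤ 1/2}` by a threshold. -/
theorem relu_network_separates_annulus
    (Ma Mb : Set (EuclideanSpace ℝ (Fin 2)))
    (hMa : Ma = {x | 1 ≤ ‖x‖ ∧ ‖x‖ ≤ 2})
    (hMb : Mb = {x | ‖x‖ ≤ 1 / 2}) :
    ∃ (k : ℕ) (A : EuclideanSpace ℝ (Fin 2) →ᵃ[ℝ] EuclideanSpace ℝ (Fin k))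
      (w : EuclideanSpace ℝ (Fin k)) (c : ℝ),
      (∀ x ∈ Ma, ⟪w, (WithLp.toLp 2 (fun i => max (A x i) 0) : EuclideanSpace ℝ (Fin k))⟫ > c) ∧
      (∀ y ∈ Mb, ⟪w, (WithLp.toLp 2 (fun i => max (A y i) 0) : EuclideanSpace ℝ (Fin k))⟫ < c) := by
  subst hMa hMb
  obtain ⟨c, houter, hinner⟩ := exists_relu_network_separates_exterior_from_ball 2
    (r := 1 / 2) (R := 1) (by norm_num; linarith [Real.sqrt_two_lt_three_halves])
  exact ⟨2 + 2, (appendNeg 2).toAffineMap, WithLp.toLp 2 fun _ => 1, c,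
    fun x hx => houter x hx.1, fun y hy => hinner y hy⟩
end
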